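/- arXiv:math/0005022 — 2 statements merged into one kernel-verified Lean document; each statement's English description precedes it below -/
import Mathlib

section
/- Let μ ∈ X∨₊ be nonzero and suppose ⟨α, μ⟩ ∈ {−1, 0, 1} for every root α ∈ R (μ is a minuscule cocharacter). Then μ is a minimal element of X∨₊: there is no ν ∈ X∨₊ with ν ≤ μ and ν ≠ μ. Moreover Ω(μ) = Wμ, the W-orbit of μ. -/
open scoped BigOperators Classical

noncomputable section

/-- Data of a finite crystallographic root system in a pair of vector spaces `V`, `V'`
(in perfect duality via `pair`), with a chosen base `Δ` and a cocharacter lattice `X`. -/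
structure RootSystemData (V V' : Type) [AddCommGroup V] [Module ℝ V]
    [FiniteDimensional ℝ V] [AddCommGroup V'] [Module ℝ V'] [FiniteDimensional ℝ V'] where
  /-- The canonical pairing between `V` and `V'`. -/
  pair : V →ₗ[ℝ] V' →ₗ[ℝ] ℝ
  /-- The (finite) set of roots. -/
  R : Finset V
  /-- The coroot attached to a root. -/
  coroot : V → V'
  root_ne_zero : ∀ α ∈ R, α ≠ (0 : V)
  neg_mem : ∀ α ∈ R, -α ∈ R
  coroot_neg : ∀ α ∈ R, coroot (-α) = -coroot α
  pair_self_eq_two : ∀ α ∈ R, pair α (coroot α) = 2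
  crystallographic : ∀ α ∈ R, ∀ β ∈ R, ∃ n : ℤ, pair α (coroot β) = (n : ℝ)
  reflect_root_mem : ∀ α ∈ R, ∀ β ∈ R, β - pair β (coroot α) • α ∈ R
  reflect_coroot_mem : ∀ α ∈ R, ∀ β ∈ R,
    coroot β - pair α (coroot β) • coroot α ∈ coroot '' R
  /-- The chosen base (set of simple roots). -/
  Δ : Finset V
  base_subset : Δ ⊆ R
  base_indep : LinearIndependent ℝ (fun a : (Δ : Set V) => (a : V))
  base_generates : ∀ α ∈ R,
    α ∈ AddSubmonoid.closure (Δ : Set V) ∨ -α ∈ AddSubmonoid.closure (Δ : Set V)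
  /-- The lattice `X∨`. -/
  X : AddSubgroup V'
  coroot_mem_X : ∀ α ∈ R, coroot α ∈ X
  X_le_span : (X : Set V') ⊆ (Submodule.span ℝ (coroot '' (R : Set V)) : Set V')
  pair_X_int : ∀ α ∈ R, ∀ x ∈ X, ∃ n : ℤ, pair α x = (n : ℝ)

namespace RootSystemData

variable {V V' : Type} [AddCommGroup V] [Module ℝ V] [FiniteDimensional ℝ V]
  [AddCommGroup V'] [Module ℝ V'] [FiniteDimensional ℝ V']
  (D : RootSystemData V V')

/-- The set `R₊` of positive roots: roots which are `ℕ`-linear combinations of the base. -/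
def Rpos : Finset V := D.R.filter fun α => α ∈ AddSubmonoid.closure (D.Δ : Set V)

/-- The coroot lattice `Q∨`. -/
def Qc : AddSubgroup V' := AddSubgroup.closure (D.coroot '' (D.R : Set V))

/-- The positive cone `Q∨₊` generated by the coroots of the positive roots. -/
def Qpos : AddSubmonoid V' := AddSubmonoid.closure (D.coroot '' (D.Rpos : Set V))

/-- The dominance order: `ν ≤ λ` iff `λ - ν ∈ Q∨₊`. -/
def leQ (ν lam : V') : Prop := lam - ν ∈ D.Qpos

/-- Dominance: `ν` is dominant iff `⟨α, ν⟩ ≥ 0` for every positive root `α`. -/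
def Dominant (ν : V') : Prop := ∀ α ∈ D.Rpos, 0 ≤ D.pair α ν

/-- The set `X∨₊` of dominant elements of the lattice. -/
def Xplus : Set V' := {x | x ∈ D.X ∧ D.Dominant x}

/-- The set `M` of minimal elements of `X∨₊ \ {0}` for the dominance order. -/
def MSet : Set V' :=
  {μ | μ ∈ D.Xplus ∧ μ ≠ 0 ∧ ∀ ν ∈ D.Xplus, ν ≠ 0 → D.leQ ν μ → ν = μ}

/-- The reflection on `V` attached to a root `α`. -/
def reflV (α : V) (hα : α ∈ D.R) : V ≃ₗ[ℝ] V :=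
  Module.reflection (show D.pair.flip (D.coroot α) α = 2 from D.pair_self_eq_two α hα)

/-- The reflection on `V'` attached to a root `α`. -/
def reflV' (α : V) (hα : α ∈ D.R) : V' ≃ₗ[ℝ] V' :=
  Module.reflection (show D.pair α (D.coroot α) = 2 from D.pair_self_eq_two α hα)

/-- The Weyl group `W`, acting simultaneously on `V` (first component)
and on `V'` (second component); it is generated by the pairs of reflections
attached to the roots. -/
def weyl : Subgroup ((V ≃ₗ[ℝ] V) × (V' ≃ₗ[ℝ] V')) :=
  Subgroup.closure {g | ∃ α, ∃ hα : α ∈ D.R, g = (D.reflV α hα, D.reflV' α hα)}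

/-- The orbit `Wμ` of `μ ∈ V'` under the Weyl group. -/
def Worbit (μ : V') : Set V' := {ν | ∃ g ∈ D.weyl, ν = g.2 μ}

/-- The set `Ω(λ) = {ν ∈ X∨ : wν ≤ λ for all w ∈ W}`. -/
def Omega (lam : V') : Set V' :=
  {ν | ν ∈ D.X ∧ ∀ g ∈ D.weyl, D.leQ (g.2 ν) lam}

/-- Two roots are linked when they are non-orthogonal. -/
def Linked (α β : V) : Prop := α ∈ D.R ∧ β ∈ D.R ∧ D.pair α (D.coroot β) ≠ 0

/-- Two roots lie in the same irreducible component iff they are connected by a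
chain of non-orthogonal roots. -/
def SameComponent (α β : V) : Prop := Relation.EqvGen D.Linked α β

/-- The half-sum `ρ` of the positive roots. -/
def rho : V := (2 : ℝ)⁻¹ • ∑ α ∈ D.Rpos, α

/-- A `W`-invariant inner product on `V'`. -/
structure WInvInner where
  form : V' →ₗ[ℝ] V' →ₗ[ℝ] ℝ
  symm : ∀ x y, form x y = form y x
  posdef : ∀ x, x ≠ 0 → 0 < form x x
  invariant : ∀ g ∈ D.weyl, ∀ x y, form (g.2 x) (g.2 y) = form x y

/-- `β` is a root whose coroot is short: for every `W`-invariant inner product `B` on `V'`,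
`B(β∨, β∨) ≤ B(α∨, α∨)` for every root `α` in the same irreducible component as `β`. -/
def IsShortCoroot (β : V) : Prop :=
  β ∈ D.R ∧ ∀ B : D.WInvInner, ∀ α ∈ D.R, D.SameComponent α β →
    B.form (D.coroot β) (D.coroot β) ≤ B.form (D.coroot α) (D.coroot α)

end RootSystemData

/-!
Write `B(x, y) = ∑_{β ∈ R} ⟨β, x⟩ ⟨β, y⟩` for the `W`-invariant form on `V'`; the pairing with
`ρ` is at least `1` on nonzero elements of `Q∨₊`. Minimality: if `ν ≤ μ` with `ν` dominant and
`μ ≠ ν`, some positive coroot `γ∨` occurring in `μ - ν` has `B(γ∨, μ - ν) > 0`, hence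
`⟨γ, μ⟩ = 1` and `⟨γ, ν⟩ = 0`, so `s_γ μ = μ - γ∨` is minuscule with `ν ≤ s_γ μ < μ`;
descending on `⟨ρ, μ - ν⟩` ends in a contradiction. Orbit: reflecting in positive roots that pair
negatively raises any `ν` to a dominant element of `Wν` lying above `ν`, which gives
`Ω(μ) ⊆ Wμ` by minimality. Conversely, raising `wμ` to a dominant `μ'` makes `μ - μ'` a
minuscule element of `Q∨`; cancelling common coroots (found with `B`, and using the finiteness
of `R`) shows that it vanishes, so `μ - wμ = μ' - wμ ∈ Q∨₊`.
-/

lemma AddSubmonoid.eq_zero_or_one_le_of_mem_closure {M : Type*} [AddCommMonoid M]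
    (f : M →+ ℝ) {S : Set M} (hS : ∀ s ∈ S, 1 ≤ f s) {x : M}
    (hx : x ∈ AddSubmonoid.closure S) : x = 0 ∨ 1 ≤ f x := by
  induction hx using AddSubmonoid.closure_induction with
  | mem s hs => exact .inr (hS s hs)
  | zero => exact .inl rfl
  | add x y _ _ hx hy =>
    rcases hx with rfl | hx
    · rwa [zero_add]
    rcases hy with rfl | hy
    · rw [add_zero]; exact .inr hx
    exact .inr (by rw [map_add]; linarith)

namespace RootSystemData

variable {V V' : Type} [AddCommGroup V] [Module ℝ V] [FiniteDimensional ℝ V]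
  [AddCommGroup V'] [Module ℝ V'] [FiniteDimensional ℝ V']
  (D : RootSystemData V V')

@[simp]
lemma reflV_apply {α : V} (hα : α ∈ D.R) (x : V) :
    D.reflV α hα x = x - D.pair x (D.coroot α) • α := by
  rw [reflV, Module.reflection_apply]; rfl

@[simp]
lemma reflV'_apply {α : V} (hα : α ∈ D.R) (y : V') :
    D.reflV' α hα y = y - D.pair α y • D.coroot α := by
  rw [reflV', Module.reflection_apply]

def weylRefl (α : V) (hα : α ∈ D.R) : (V ≃ₗ[ℝ] V) × (V' ≃ₗ[ℝ] V') :=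
  (D.reflV α hα, D.reflV' α hα)

lemma weylRefl_mem {α : V} (hα : α ∈ D.R) : D.weylRefl α hα ∈ D.weyl :=
  Subgroup.subset_closure ⟨α, hα, rfl⟩

@[simp]
lemma weylRefl_fst {α : V} (hα : α ∈ D.R) : (D.weylRefl α hα).1 = D.reflV α hα := rfl

@[simp]
lemma weylRefl_snd {α : V} (hα : α ∈ D.R) : (D.weylRefl α hα).2 = D.reflV' α hα := rfl

section Weyl

variable {D} {g : (V ≃ₗ[ℝ] V) × (V' ≃ₗ[ℝ] V')}

/-- Reflections are involutions, so the inverses of the generators need no separate case. -/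
@[elab_as_elim]
lemma weyl_induction {p : ∀ g, g ∈ D.weyl → Prop}
    (refl : ∀ α (hα : α ∈ D.R), p (D.weylRefl α hα) (D.weylRefl_mem hα))
    (one : p 1 (one_mem _))
    (mul : ∀ g h hg hh, p g hg → p h hh → p (g * h) (mul_mem hg hh))
    (hg : g ∈ D.weyl) : p g hg := by
  induction hg using Subgroup.closure_induction'' with
  | mem g hg => obtain ⟨α, hα, rfl⟩ := hg; exact refl α hα
  | inv_mem g hg => obtain ⟨α, hα, rfl⟩ := hg; exact refl α hα
  | one => exact one
  | mul g h _ _ hg hh => exact mul g h _ _ hg hh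

lemma pair_weyl_apply (hg : g ∈ D.weyl) (x : V) (y : V') :
    D.pair (g.1 x) (g.2 y) = D.pair x y := by
  induction hg using weyl_induction generalizing x y with
  | refl α hα =>
    simp only [weylRefl_fst, weylRefl_snd, reflV_apply, reflV'_apply, map_sub, map_smul,
      LinearMap.sub_apply, LinearMap.smul_apply, smul_eq_mul, D.pair_self_eq_two α hα]
    ring
  | one => rfl
  | mul g h _ _ hg hh => exact (hg _ _).trans (hh x y)

lemma pair_weyl_apply_right (hg : g ∈ D.weyl) (x : V) (y : V') :
    D.pair x (g.2 y) = D.pair ((g⁻¹).1 x) y := by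
  simpa using pair_weyl_apply hg ((g⁻¹).1 x) y

lemma weyl_apply_mem_R (hg : g ∈ D.weyl) {α : V} (hα : α ∈ D.R) : g.1 α ∈ D.R := by
  induction hg using weyl_induction generalizing α with
  | refl β hβ => simpa using D.reflect_root_mem β hβ α hα
  | one => exact hα
  | mul g h _ _ hg hh => exact hg (hh hα)

lemma weyl_apply_mem_X (hg : g ∈ D.weyl) {x : V'} (hx : x ∈ D.X) : g.2 x ∈ D.X := by
  induction hg using weyl_induction generalizing x with
  | refl α hα =>
    obtain ⟨n, hn⟩ := D.pair_X_int α hα x hx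
    simpa [hn, Int.cast_smul_eq_zsmul] using sub_mem hx (zsmul_mem (D.coroot_mem_X α hα) n)
  | one => exact hx
  | mul g h _ _ hg hh => exact hg (hh hx)

lemma coroot_mem_Qc {α : V} (hα : α ∈ D.R) : D.coroot α ∈ D.Qc :=
  AddSubgroup.subset_closure ⟨α, hα, rfl⟩

variable (D) in
lemma Qc_le_X : D.Qc ≤ D.X := by
  rw [Qc, AddSubgroup.closure_le]
  rintro _ ⟨α, hα, rfl⟩
  exact D.coroot_mem_X α hα

lemma weyl_apply_sub_mem_Qc (hg : g ∈ D.weyl) {x : V'} (hx : x ∈ D.X) : g.2 x - x ∈ D.Qc := by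
  induction hg using weyl_induction generalizing x with
  | refl α hα =>
    obtain ⟨n, hn⟩ := D.pair_X_int α hα x hx
    simpa [hn, Int.cast_smul_eq_zsmul] using
      NegMemClass.neg_mem (zsmul_mem (coroot_mem_Qc hα) n)
  | one => simp
  | mul g h _ hh ihg ihh =>
    exact sub_add_sub_cancel _ _ x ▸ add_mem (ihg (weyl_apply_mem_X hh hx)) (ihh hx)

lemma sum_R_weyl_apply (hg : g ∈ D.weyl) (f : V → ℝ) :
    ∑ β ∈ D.R, f (g.1 β) = ∑ β ∈ D.R, f β :=
  Finset.sum_nbij' g.1 (g⁻¹).1 (fun _ hβ => weyl_apply_mem_R hg hβ)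
    (fun _ hβ => weyl_apply_mem_R (inv_mem hg) hβ) (fun β _ => by simp) (fun β _ => by simp)
    (fun _ _ => rfl)

end Weyl

variable {D}

lemma mem_R_of_mem_Rpos {γ : V} (hγ : γ ∈ D.Rpos) : γ ∈ D.R := (Finset.mem_filter.mp hγ).1

lemma mem_Rpos_or_neg_mem_Rpos {α : V} (hα : α ∈ D.R) : α ∈ D.Rpos ∨ -α ∈ D.Rpos := by
  rcases D.base_generates α hα with h | h
  · exact .inl (Finset.mem_filter.mpr ⟨hα, h⟩)
  · exact .inr (Finset.mem_filter.mpr ⟨D.neg_mem α hα, h⟩)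

variable (D) in
lemma exists_height : ∃ φ : V →ₗ[ℝ] ℝ, ∀ δ ∈ D.Δ, φ δ = 1 := by
  have hΔ : LinearIndepOn ℝ id (D.Δ : Set V) := D.base_indep
  refine ⟨(Module.Basis.extend hΔ).constr ℝ fun _ => 1, fun δ hδ => ?_⟩
  simpa only [Module.Basis.extend_apply_self] using (Module.Basis.extend hΔ).constr_basis ℝ
    (fun _ => (1 : ℝ)) ⟨δ, Module.Basis.subset_extend _ hδ⟩

lemma one_le_height {φ : V →ₗ[ℝ] ℝ} (hφ : ∀ δ ∈ D.Δ, φ δ = 1) {γ : V} (hγ : γ ∈ D.Rpos) :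
    1 ≤ φ γ :=
  (AddSubmonoid.eq_zero_or_one_le_of_mem_closure φ.toAddMonoidHom (fun δ hδ => (hφ δ hδ).ge)
    (Finset.mem_filter.mp hγ).2).resolve_left (D.root_ne_zero γ (mem_R_of_mem_Rpos hγ))

lemma neg_notMem_Rpos {γ : V} (hγ : γ ∈ D.Rpos) : -γ ∉ D.Rpos := fun hγ' => by
  obtain ⟨φ, hφ⟩ := D.exists_height
  have := one_le_height hφ hγ'
  linarith [one_le_height hφ hγ, map_neg φ γ]

lemma sum_R_eq_two_mul_sum_Rpos (f : V → ℝ) (hf : ∀ β, f (-β) = f β) :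
    ∑ β ∈ D.R, f β = 2 * ∑ β ∈ D.Rpos, f β := by
  rw [← Finset.sum_filter_add_sum_filter_not D.R (· ∈ AddSubmonoid.closure (D.Δ : Set V)),
    two_mul]
  congr 1
  refine Finset.sum_nbij' (- ·) (- ·) (fun β hβ => ?_) (fun β hβ => ?_) (by simp) (by simp)
    (fun β _ => (hf β).symm)
  · obtain ⟨hβR, hβ⟩ := Finset.mem_filter.mp hβ
    exact (mem_Rpos_or_neg_mem_Rpos hβR).resolve_left fun h => hβ (Finset.mem_filter.mp h).2
  · exact Finset.mem_filter.mpr ⟨D.neg_mem β (mem_R_of_mem_Rpos hβ),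
      fun h => neg_notMem_Rpos hβ (Finset.mem_filter.mpr ⟨D.neg_mem β (mem_R_of_mem_Rpos hβ), h⟩)⟩

variable (D) in
lemma pair_rho (x : V') : D.pair D.rho x = 2⁻¹ * ∑ β ∈ D.Rpos, D.pair β x := by
  simp [rho, map_sum]

/-- For a linear form `φ` equal to `1` on `Δ`, the fact that `s_γ` permutes `R` gives
`2 ⟨ρ, γ∨⟩ φ γ = ∑_{β > 0} (|φ (s_γ β)| - φ (s_γ β))`, whose term at `β = γ` is `2 φ γ`. -/
lemma one_le_pair_rho_coroot {γ : V} (hγ : γ ∈ D.Rpos) : 1 ≤ D.pair D.rho (D.coroot γ) := by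
  obtain ⟨φ, hφ⟩ := D.exists_height
  have hγR := mem_R_of_mem_Rpos hγ
  set s := D.reflV γ hγR
  have hφs : ∀ β, φ (s β) = φ β - D.pair β (D.coroot γ) * φ γ := by simp [s]
  have habs : ∑ β ∈ D.Rpos, φ β = ∑ β ∈ D.Rpos, |φ (s β)| := by
    have h1 := D.sum_R_eq_two_mul_sum_Rpos (fun β => |φ β|) (by simp)
    have h2 := D.sum_R_eq_two_mul_sum_Rpos (fun β => |φ (s β)|) (by simp)
    have h3 := sum_R_weyl_apply (D.weylRefl_mem hγR) (fun β => |φ β|)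
    have h4 : ∑ β ∈ D.Rpos, |φ β| = ∑ β ∈ D.Rpos, φ β :=
      Finset.sum_congr rfl fun β hβ => abs_of_nonneg (by linarith [one_le_height hφ hβ])
    simp only [weylRefl_fst] at h3
    linarith
  have hterm : 2 * φ γ ≤ ∑ β ∈ D.Rpos, (|φ (s β)| - φ (s β)) := by
    have hsγ : φ (s γ) = -φ γ := by rw [hφs, D.pair_self_eq_two γ hγR]; ring
    have := Finset.single_le_sum (f := fun β => |φ (s β)| - φ (s β))
      (fun β _ => sub_nonneg.2 (le_abs_self _)) hγ
    rw [hsγ, abs_neg, abs_of_pos (by linarith [one_le_height hφ hγ])] at this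
    linarith
  have hsum : ∑ β ∈ D.Rpos, (|φ (s β)| - φ (s β)) = 2 * D.pair D.rho (D.coroot γ) * φ γ := by
    rw [Finset.sum_sub_distrib, ← habs]
    simp only [hφs, Finset.sum_sub_distrib, D.pair_rho, ← Finset.sum_mul]
    ring
  nlinarith [one_le_height hφ hγ]

variable (D) in
def invForm : V' →ₗ[ℝ] V' →ₗ[ℝ] ℝ := ∑ β ∈ D.R, (D.pair β).smulRight (D.pair β)

variable (D) in
@[simp]
lemma invForm_apply (x y : V') : D.invForm x y = ∑ β ∈ D.R, D.pair β x * D.pair β y := by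
  simp [invForm]

variable (D) in
lemma invForm_comm (x y : V') : D.invForm x y = D.invForm y x := by
  simp only [invForm_apply, mul_comm]

variable (D) in
lemma invForm_self_nonneg (x : V') : 0 ≤ D.invForm x x := by
  rw [invForm_apply]
  exact Finset.sum_nonneg fun β _ => mul_self_nonneg _

lemma invForm_weyl_apply {g : (V ≃ₗ[ℝ] V) × (V' ≃ₗ[ℝ] V')} (hg : g ∈ D.weyl) (x y : V') :
    D.invForm (g.2 x) (g.2 y) = D.invForm x y := by
  simp only [invForm_apply, pair_weyl_apply_right hg]
  exact sum_R_weyl_apply (inv_mem hg) fun β => D.pair β x * D.pair β y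

lemma two_mul_invForm_coroot {γ : V} (hγ : γ ∈ D.R) (x : V') :
    2 * D.invForm x (D.coroot γ) = D.pair γ x * D.invForm (D.coroot γ) (D.coroot γ) := by
  have h := invForm_weyl_apply (D.weylRefl_mem hγ) x (D.coroot γ)
  simp only [weylRefl_snd, reflV'_apply, D.pair_self_eq_two γ hγ, map_sub, map_smul,
    LinearMap.sub_apply, LinearMap.smul_apply, smul_eq_mul] at h
  linarith

variable (D) in
lemma invForm_sq_le (x y : V') : D.invForm x y ^ 2 ≤ D.invForm x x * D.invForm y y := by
  simpa only [invForm_apply, pow_two] using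
    Finset.sum_mul_sq_le_sq_mul_sq D.R (fun β => D.pair β x) (fun β => D.pair β y)

lemma pair_eq_zero_of_invForm_self_eq_zero {x : V'} (hx : D.invForm x x = 0) {β : V}
    (hβ : β ∈ D.R) : D.pair β x = 0 := by
  rw [invForm_apply, Finset.sum_eq_zero_iff_of_nonneg fun β _ => mul_self_nonneg _] at hx
  exact mul_self_eq_zero.mp (hx β hβ)

lemma invForm_self_pos {x : V'} {β : V} (hβ : β ∈ D.R) (hx : D.pair β x ≠ 0) :
    0 < D.invForm x x :=
  (D.invForm_self_nonneg x).lt_of_ne fun h =>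
    hx (pair_eq_zero_of_invForm_self_eq_zero h.symm hβ)

lemma coroot_mem_Qpos {γ : V} (hγ : γ ∈ D.Rpos) : D.coroot γ ∈ D.Qpos :=
  AddSubmonoid.subset_closure ⟨γ, hγ, rfl⟩

lemma coroot_mem_Qpos_or_neg_mem_Qpos {γ : V} (hγ : γ ∈ D.R) :
    D.coroot γ ∈ D.Qpos ∨ -D.coroot γ ∈ D.Qpos := by
  rcases mem_Rpos_or_neg_mem_Rpos hγ with h | h
  · exact .inl (coroot_mem_Qpos h)
  · exact .inr (D.coroot_neg γ hγ ▸ coroot_mem_Qpos h)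

lemma eq_zero_or_one_le_pair_rho {x : V'} (hx : x ∈ D.Qpos) :
    x = 0 ∨ 1 ≤ D.pair D.rho x :=
  AddSubmonoid.eq_zero_or_one_le_of_mem_closure (D.pair D.rho).toAddMonoidHom
    (by rintro _ ⟨γ, hγ, rfl⟩; exact one_le_pair_rho_coroot hγ) hx

lemma pair_rho_nonneg {x : V'} (hx : x ∈ D.Qpos) : 0 ≤ D.pair D.rho x := by
  rcases eq_zero_or_one_le_pair_rho hx with rfl | h
  · simp
  · linarith

lemma Qpos_induction {p : V' → Prop} (zero : p 0)
    (step : ∀ x ∈ D.Qpos, x ≠ 0 →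
      (∀ y ∈ D.Qpos, D.pair D.rho y + 1 ≤ D.pair D.rho x → p y) → p x)
    {x : V'} (hx : x ∈ D.Qpos) : p x := by
  obtain ⟨k, hk⟩ := exists_nat_ge (D.pair D.rho x)
  induction k generalizing x with
  | zero =>
    rcases eq_zero_or_one_le_pair_rho hx with rfl | h
    · exact zero
    · norm_num at hk; linarith
  | succ k ih =>
    rcases eq_or_ne x 0 with rfl | hx0
    · exact zero
    · exact step x hx hx0 fun y hy hyx => ih hy (by push_cast at hk; linarith)

lemma exists_coroot_sub_mem_Qpos (f : V' →+ ℝ) {x : V'} (hx : x ∈ D.Qpos) (hf : 0 < f x) :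
    ∃ γ ∈ D.Rpos, x - D.coroot γ ∈ D.Qpos ∧ 0 < f (D.coroot γ) := by
  induction hx using AddSubmonoid.closure_induction with
  | mem _ hx =>
    obtain ⟨γ, hγ, rfl⟩ := hx
    exact ⟨γ, hγ, by simp, hf⟩
  | zero => simp at hf
  | add x y hx hy ihx ihy =>
    rw [map_add] at hf
    rcases lt_or_ge 0 (f x) with hfx | hfx
    · obtain ⟨γ, hγ, hxγ, hfγ⟩ := ihx hfx
      exact ⟨γ, hγ, by simpa [sub_add_eq_add_sub] using add_mem hxγ hy, hfγ⟩
    · obtain ⟨γ, hγ, hyγ, hfγ⟩ := ihy (by linarith)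
      exact ⟨γ, hγ, by rw [add_sub_assoc]; exact add_mem hx hyγ, hfγ⟩

lemma invForm_self_pos_of_mem_Qpos {x : V'} (hx : x ∈ D.Qpos) (hx0 : x ≠ 0) :
    0 < D.invForm x x := by
  have hρ := (eq_zero_or_one_le_pair_rho hx).resolve_left hx0
  rw [pair_rho] at hρ
  obtain ⟨β, hβ, hβx⟩ := Finset.exists_ne_zero_of_sum_ne_zero (s := D.Rpos)
    (f := fun β => D.pair β x) (by intro h; rw [h] at hρ; norm_num at hρ)
  exact invForm_self_pos (mem_R_of_mem_Rpos hβ) hβx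

lemma invForm_nonneg_of_dominant {z b : V'} (hz : D.Dominant z) (hb : b ∈ D.Qpos) :
    0 ≤ D.invForm z b := by
  induction hb using AddSubmonoid.closure_induction with
  | mem _ hb =>
    obtain ⟨γ, hγ : γ ∈ D.Rpos, rfl⟩ := hb
    have := two_mul_invForm_coroot (mem_R_of_mem_Rpos hγ) z
    nlinarith [hz γ hγ, D.invForm_self_nonneg (D.coroot γ)]
  | zero => simp
  | add x y _ _ hx hy => rw [map_add]; linarith

lemma exists_add_mem_Qpos_of_mem_Qc {x : V'} (hx : x ∈ D.Qc) :
    ∃ b ∈ D.Qpos, x + b ∈ D.Qpos := by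
  induction hx using AddSubgroup.closure_induction with
  | mem _ hx =>
    obtain ⟨γ, hγ, rfl⟩ := hx
    rcases coroot_mem_Qpos_or_neg_mem_Qpos hγ with h | h
    · exact ⟨0, zero_mem _, by simpa using h⟩
    · exact ⟨_, h, by simp⟩
  | zero => exact ⟨0, zero_mem _, by simp⟩
  | add x y _ _ hx hy =>
    obtain ⟨b, hb, hxb⟩ := hx
    obtain ⟨c, hc, hyc⟩ := hy
    exact ⟨b + c, add_mem hb hc, by simpa [add_add_add_comm] using add_mem hxb hyc⟩
  | neg x _ hx =>
    obtain ⟨b, hb, hxb⟩ := hx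
    exact ⟨x + b, hxb, by simpa using hb⟩

/-- If `n = γ∨ - δ∨` pairs trivially with all roots, reflecting in the coroot `u + n` sends the
coroot `u` to `-(u + 2 n)`; so all `δ∨ + k n` would be coroots, and finiteness forces `n = 0`. -/
lemma coroot_eq_of_forall_pair_sub_eq_zero {γ δ : V} (hγ : γ ∈ D.R) (hδ : δ ∈ D.R)
    (h : ∀ β ∈ D.R, D.pair β (D.coroot γ - D.coroot δ) = 0) : D.coroot γ = D.coroot δ := by
  set n := D.coroot γ - D.coroot δ
  have hstep : ∀ u ∈ D.coroot '' (D.R : Set V), u + n ∈ D.coroot '' (D.R : Set V) →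
      u + (2 : ℝ) • n ∈ D.coroot '' (D.R : Set V) := by
    rintro _ ⟨β, hβ, rfl⟩ ⟨ε, hε, hεn⟩
    obtain ⟨η, hη, hηeq⟩ := D.reflect_coroot_mem ε hε β hβ
    have hpair : D.pair ε (D.coroot β) = 2 := by
      have := D.pair_self_eq_two ε hε
      rwa [hεn, map_add, h ε hε, add_zero] at this
    refine ⟨-η, D.neg_mem η hη, ?_⟩
    rw [D.coroot_neg η hη, hηeq, hpair, hεn]
    module
  have hmem : ∀ k : ℕ, D.coroot δ + (k : ℝ) • n ∈ D.coroot '' (D.R : Set V) ∧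
      D.coroot δ + ((k : ℝ) + 1) • n ∈ D.coroot '' (D.R : Set V) := by
    intro k
    induction k with
    | zero => simpa [n] using ⟨⟨δ, hδ, rfl⟩, ⟨γ, hγ, rfl⟩⟩
    | succ k ih =>
      refine ⟨by simpa using ih.2, ?_⟩
      convert hstep _ ih.1 (by convert ih.2 using 1; module) using 1
      push_cast
      module
  by_contra hne
  have hn : n ≠ 0 := sub_ne_zero.mpr hne
  refine Set.infinite_of_injective_forall_mem (fun k l hkl => ?_) (fun k => (hmem k).1)
    (D.R.finite_toSet.image D.coroot)
  exact_mod_cast smul_left_injective ℝ hn (add_left_cancel hkl)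

lemma sub_mem_Qpos_or_of_pair_eq_one {γ δ : V} (hγ : γ ∈ D.R) (hδ : δ ∈ D.R)
    (h : D.pair δ (D.coroot γ) = 1) :
    D.coroot γ - D.coroot δ ∈ D.Qpos ∨ D.coroot δ - D.coroot γ ∈ D.Qpos := by
  obtain ⟨ε, hε, hεeq⟩ := D.reflect_coroot_mem δ hδ γ hγ
  rw [h, one_smul] at hεeq
  simpa [hεeq] using coroot_mem_Qpos_or_neg_mem_Qpos hε

/-- The pairings `a = ⟨δ, γ∨⟩` and `b = ⟨γ, δ∨⟩` are positive integers; if neither is `1`, the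
Cauchy–Schwarz inequality for `invForm` forces `a = b = 2` and `γ∨ - δ∨` to be isotropic. -/
lemma sub_mem_Qpos_or_of_invForm_pos {γ δ : V} (hγ : γ ∈ D.R) (hδ : δ ∈ D.R)
    (h : 0 < D.invForm (D.coroot γ) (D.coroot δ)) :
    D.coroot γ - D.coroot δ ∈ D.Qpos ∨ D.coroot δ - D.coroot γ ∈ D.Qpos := by
  have hγδ := two_mul_invForm_coroot hδ (D.coroot γ)
  have hδγ := two_mul_invForm_coroot hγ (D.coroot δ)
  rw [invForm_comm] at hδγ
  have hPγ := D.invForm_self_nonneg (D.coroot γ)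
  have hPδ := D.invForm_self_nonneg (D.coroot δ)
  obtain ⟨a, ha⟩ := D.crystallographic δ hδ γ hγ
  obtain ⟨b, hb⟩ := D.crystallographic γ hγ δ hδ
  rw [ha] at hγδ
  rw [hb] at hδγ
  by_cases ha1 : a = 1
  · exact sub_mem_Qpos_or_of_pair_eq_one hγ hδ (by simp [ha, ha1])
  by_cases hb1 : b = 1
  · exact (sub_mem_Qpos_or_of_pair_eq_one hδ hγ (by simp [hb, hb1])).symm
  have two_le : ∀ {n : ℤ} {P : ℝ}, 0 ≤ P → 2 * D.invForm (D.coroot γ) (D.coroot δ) = n * P →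
      n ≠ 1 → (2 : ℝ) ≤ n := fun {n P} hP hnP hn1 => by
    have : (0 : ℝ) < n * P := by linarith
    have : 0 < n := by exact_mod_cast pos_of_mul_pos_left this hP
    exact_mod_cast (show 2 ≤ n by omega)
  have ha2 := two_le hPδ hγδ ha1
  have hb2 := two_le hPγ hδγ hb1
  have hCS := D.invForm_sq_le (D.coroot γ) (D.coroot δ)
  have hisotropic : D.invForm (D.coroot γ - D.coroot δ) (D.coroot γ - D.coroot δ) = 0 := by
    simp only [map_sub, LinearMap.sub_apply, D.invForm_comm (D.coroot δ) (D.coroot γ)]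
    have : D.invForm (D.coroot γ) (D.coroot δ) ^ 2 =
        D.invForm (D.coroot γ) (D.coroot γ) * D.invForm (D.coroot δ) (D.coroot δ) := by
      nlinarith [mul_le_mul ha2 hb2 (by norm_num) (by linarith)]
    nlinarith
  left
  rw [coroot_eq_of_forall_pair_sub_eq_zero hγ hδ
    fun β hβ => pair_eq_zero_of_invForm_self_eq_zero hisotropic hβ, sub_self]
  exact zero_mem _

lemma exists_coroot_sub_mem_Qpos_of_invForm_pos {a b : V'} (ha : a ∈ D.Qpos) (hb : b ∈ D.Qpos)
    (h : 0 < D.invForm a b) :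
    ∃ γ ∈ D.Rpos, a - D.coroot γ ∈ D.Qpos ∧ b - D.coroot γ ∈ D.Qpos := by
  obtain ⟨γ, hγ, haγ, hγb⟩ := exists_coroot_sub_mem_Qpos (D.invForm.flip b).toAddMonoidHom ha h
  obtain ⟨δ, hδ, hbδ, hγδ⟩ :=
    exists_coroot_sub_mem_Qpos (D.invForm (D.coroot γ)).toAddMonoidHom hb hγb
  rcases sub_mem_Qpos_or_of_invForm_pos (mem_R_of_mem_Rpos hγ) (mem_R_of_mem_Rpos hδ) hγδ
    with h | h
  · exact ⟨δ, hδ, sub_add_sub_cancel a _ _ ▸ add_mem haγ h, hbδ⟩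
  · exact ⟨γ, hγ, haγ, sub_add_sub_cancel b _ _ ▸ add_mem hbδ h⟩

lemma exists_weylRefl_of_not_dominant {ν : V'} (hν : ν ∈ D.X) (hnd : ¬ D.Dominant ν) :
    ∃ α, ∃ hα : α ∈ D.R, (D.weylRefl α hα).2 ν - ν ∈ D.Qpos ∧
      D.pair D.rho ν + 1 ≤ D.pair D.rho ((D.weylRefl α hα).2 ν) := by
  simp only [Dominant, not_forall, not_le] at hnd
  obtain ⟨α, hαP, hαν⟩ := hnd
  have hα := mem_R_of_mem_Rpos hαP
  obtain ⟨m, hm⟩ : ∃ m : ℕ, D.pair α ν = -(m + 1) := by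
    obtain ⟨n, hn⟩ := D.pair_X_int α hα ν hν
    obtain ⟨m, rfl⟩ := Int.eq_negSucc_of_lt_zero (by exact_mod_cast hn ▸ hαν)
    exact ⟨m, by rw [hn, Int.cast_negSucc, Nat.cast_succ]⟩
  have hsub : (D.weylRefl α hα).2 ν - ν = (m + 1) • D.coroot α := by
    simp only [weylRefl_snd, reflV'_apply, hm]
    rw [← Nat.cast_smul_eq_nsmul ℝ]
    push_cast
    module
  refine ⟨α, hα, hsub ▸ nsmul_mem (coroot_mem_Qpos hαP) _, ?_⟩
  rw [← sub_add_cancel ((D.weylRefl α hα).2 ν) ν, hsub, map_add, map_nsmul, nsmul_eq_mul]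
  push_cast
  nlinarith [one_le_pair_rho_coroot hαP, m.cast_nonneg (α := ℝ)]

lemma exists_weyl_dominant {ν : V'} (hν : ν ∈ D.X) {C : ℝ}
    (hC : ∀ g ∈ D.weyl, D.pair D.rho (g.2 ν) ≤ C) :
    ∃ w ∈ D.weyl, D.Dominant (w.2 ν) ∧ w.2 ν - ν ∈ D.Qpos := by
  obtain ⟨k, hk⟩ := exists_nat_ge (C - D.pair D.rho ν)
  induction k generalizing ν with
  | zero =>
    refine ⟨1, one_mem _, ?_, by simp⟩
    by_contra hnd
    obtain ⟨α, hα, -, hlt⟩ := exists_weylRefl_of_not_dominant hν hnd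
    have := hC _ (D.weylRefl_mem hα)
    norm_num at hk
    linarith
  | succ k ih =>
    by_cases hd : D.Dominant ν
    · exact ⟨1, one_mem _, hd, by simp⟩
    obtain ⟨α, hα, hsub, hlt⟩ := exists_weylRefl_of_not_dominant hν hd
    have hs := D.weylRefl_mem hα
    obtain ⟨w, hw, hdom, hwsub⟩ := ih (weyl_apply_mem_X hs hν)
      (fun g hg => hC _ (mul_mem hg hs)) (by push_cast at hk; linarith)
    exact ⟨w * _, mul_mem hw hs, hdom, sub_add_sub_cancel _ _ ν ▸ add_mem hwsub hsub⟩

variable (D) in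
def IsMinuscule (x : V') : Prop := ∀ β ∈ D.R, |D.pair β x| ≤ 1

lemma IsMinuscule.weyl_apply {x : V'} (hx : D.IsMinuscule x)
    {g : (V ≃ₗ[ℝ] V) × (V' ≃ₗ[ℝ] V')} (hg : g ∈ D.weyl) : D.IsMinuscule (g.2 x) :=
  fun β hβ => by
    rw [pair_weyl_apply_right hg]
    exact hx _ (weyl_apply_mem_R (inv_mem hg) hβ)

lemma isMinuscule_of_forall_Rpos {x : V'} (hx : ∀ β ∈ D.Rpos, |D.pair β x| ≤ 1) :
    D.IsMinuscule x := fun β hβ => by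
  rcases mem_Rpos_or_neg_mem_Rpos hβ with h | h
  · exact hx β h
  · simpa using hx (-β) h

lemma IsMinuscule.sub_of_dominant {x y : V'} (hx : D.IsMinuscule x) (hxd : D.Dominant x)
    (hy : D.IsMinuscule y) (hyd : D.Dominant y) : D.IsMinuscule (x - y) :=
  isMinuscule_of_forall_Rpos fun β hβ => by
    have := (abs_le.mp (hx β (mem_R_of_mem_Rpos hβ))).2
    have := (abs_le.mp (hy β (mem_R_of_mem_Rpos hβ))).2
    rw [map_sub, abs_le]
    constructor <;> linarith [hxd β hβ, hyd β hβ]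

lemma IsMinuscule.pair_rho_le {x : V'} (hx : D.IsMinuscule x) :
    D.pair D.rho x ≤ 2⁻¹ * D.Rpos.card := by
  rw [pair_rho]
  gcongr
  calc ∑ β ∈ D.Rpos, D.pair β x ≤ ∑ _β ∈ D.Rpos, (1 : ℝ) :=
        Finset.sum_le_sum fun β hβ => (abs_le.mp (hx β (mem_R_of_mem_Rpos hβ))).2
    _ = D.Rpos.card := by simp

lemma eq_of_sub_mem_Qpos {μ ν : V'} (hμX : μ ∈ D.X) (hμ : D.IsMinuscule μ) (hνX : ν ∈ D.X)
    (hν : D.Dominant ν) (h : μ - ν ∈ D.Qpos) : μ = ν := by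
  refine Qpos_induction (p := fun x => ∀ μ ∈ D.X, D.IsMinuscule μ → μ - ν = x → μ = ν)
    (fun μ _ _ h => sub_eq_zero.mp h) (fun x hx hx0 ih μ hμX hμ hμx => ?_) h μ hμX hμ rfl
  subst hμx
  obtain ⟨γ, hγ, hxγ, hγx⟩ := exists_coroot_sub_mem_Qpos
    (D.invForm.flip (μ - ν)).toAddMonoidHom hx (invForm_self_pos_of_mem_Qpos hx hx0)
  have hγR := mem_R_of_mem_Rpos hγ
  have hpos : 0 < D.pair γ (μ - ν) := by
    have := two_mul_invForm_coroot hγR (μ - ν)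
    rw [invForm_comm] at this
    change 0 < D.invForm (D.coroot γ) (μ - ν) at hγx
    nlinarith [D.invForm_self_nonneg (D.coroot γ)]
  have hone : 1 ≤ D.pair γ (μ - ν) := by
    obtain ⟨n, hn⟩ := D.pair_X_int γ hγR _ (sub_mem hμX hνX)
    rw [hn] at hpos ⊢
    have : 0 < n := by exact_mod_cast hpos
    exact_mod_cast (show 1 ≤ n by omega)
  have hμγ : D.pair γ μ = 1 := by
    rw [map_sub] at hone
    linarith [(abs_le.mp (hμ γ hγR)).2, hν γ hγ]
  have hrefl : (D.weylRefl γ hγR).2 μ = μ - D.coroot γ := by simp [hμγ]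
  have hμν := ih _ hxγ (by rw [map_sub]; linarith [one_le_pair_rho_coroot hγ]) (μ - D.coroot γ)
    (sub_mem hμX (D.coroot_mem_X γ hγR)) (hrefl ▸ hμ.weyl_apply (D.weylRefl_mem hγR))
    (by abel)
  have := congrArg (D.pair γ) hμν
  rw [map_sub, hμγ, D.pair_self_eq_two γ hγR] at this
  linarith [hν γ hγ]

/-- `B(z + b, b) > 0` as `z` is dominant, so `z + b` and `b` share a coroot; cancel it and descend
on `⟨ρ, b⟩`. -/
lemma eq_zero_of_add_mem_Qpos {z b : V'} (hzX : z ∈ D.X) (hz : D.IsMinuscule z)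
    (hzd : D.Dominant z) (hb : b ∈ D.Qpos) (hzb : z + b ∈ D.Qpos) : z = 0 := by
  refine Qpos_induction (p := fun b => z + b ∈ D.Qpos → z = 0)
    (fun h => eq_of_sub_mem_Qpos hzX hz (zero_mem _) (fun _ _ => by simp) (by simpa using h))
    (fun b hb hb0 ih hzb => ?_) hb hzb
  have hpos : 0 < D.invForm (z + b) b := by
    rw [map_add, LinearMap.add_apply]
    linarith [invForm_nonneg_of_dominant hzd hb, invForm_self_pos_of_mem_Qpos hb hb0]
  obtain ⟨γ, hγ, hzbγ, hbγ⟩ := exists_coroot_sub_mem_Qpos_of_invForm_pos hzb hb hpos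
  exact ih _ hbγ (by rw [map_sub]; linarith [one_le_pair_rho_coroot hγ])
    (add_sub_assoc z b _ ▸ hzbγ)

lemma eq_zero_of_mem_Qc {z : V'} (hzQ : z ∈ D.Qc) (hz : D.IsMinuscule z) : z = 0 := by
  have hzX : z ∈ D.X := D.Qc_le_X hzQ
  obtain ⟨w, hw, hdom, -⟩ :=
    exists_weyl_dominant hzX fun g hg => (hz.weyl_apply hg).pair_rho_le
  have hwQ : w.2 z ∈ D.Qc :=
    sub_add_cancel (w.2 z) z ▸ add_mem (weyl_apply_sub_mem_Qc hw hzX) hzQ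
  obtain ⟨b, hb, hzb⟩ := exists_add_mem_Qpos_of_mem_Qc hwQ
  have := eq_zero_of_add_mem_Qpos (weyl_apply_mem_X hw hzX) (hz.weyl_apply hw) hdom hb hzb
  simpa using congrArg w.2.symm this

lemma sub_weyl_apply_mem_Qpos {μ : V'} (hμX : μ ∈ D.X) (hμd : D.Dominant μ)
    (hμ : D.IsMinuscule μ) {g : (V ≃ₗ[ℝ] V) × (V' ≃ₗ[ℝ] V')} (hg : g ∈ D.weyl) :
    μ - g.2 μ ∈ D.Qpos := by
  obtain ⟨w, hw, hdom, hsub⟩ := exists_weyl_dominant (weyl_apply_mem_X hg hμX)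
    fun h hh => (hμ.weyl_apply (mul_mem hh hg)).pair_rho_le
  convert hsub using 2
  rw [← sub_eq_zero]
  refine eq_zero_of_mem_Qc ?_ (hμ.sub_of_dominant hμd (hμ.weyl_apply (mul_mem hw hg)) hdom)
  simpa using NegMemClass.neg_mem (weyl_apply_sub_mem_Qc (mul_mem hw hg) hμX)

end RootSystemData

theorem minuscule_minimal_and_orbit_general {V V' : Type} [AddCommGroup V] [Module ℝ V] [FiniteDimensional ℝ V]
    [AddCommGroup V'] [Module ℝ V'] [FiniteDimensional ℝ V']
    (D : RootSystemData V V')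
    (μ : V') (hX : μ ∈ D.X) (hdom : D.Dominant μ)
    (hmin : ∀ α ∈ D.R, D.pair α μ = -1 ∨ D.pair α μ = 0 ∨ D.pair α μ = 1) :
    (¬ ∃ ν ∈ D.Xplus, D.leQ ν μ ∧ ν ≠ μ) ∧ D.Omega μ = D.Worbit μ := by
  have hμ : D.IsMinuscule μ := fun β hβ => by rcases hmin β hβ with h | h | h <;> simp [h]
  have hminimal : ∀ ν ∈ D.Xplus, D.leQ ν μ → ν = μ := fun ν hν hle =>
    (RootSystemData.eq_of_sub_mem_Qpos hX hμ hν.1 hν.2 hle).symm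
  refine ⟨fun ⟨ν, hν, hle, hne⟩ => hne (hminimal ν hν hle), Set.Subset.antisymm ?_ ?_⟩
  · rintro ν ⟨hνX, hν⟩
    obtain ⟨w, hw, hwν, -⟩ := RootSystemData.exists_weyl_dominant hνX fun g hg => by
      have := RootSystemData.pair_rho_nonneg (hν g hg)
      rw [map_sub] at this
      exact sub_nonneg.mp this
    refine ⟨w⁻¹, inv_mem hw, ?_⟩
    rw [← hminimal _ ⟨RootSystemData.weyl_apply_mem_X hw hνX, hwν⟩ (hν w hw)]
    simp
  · rintro _ ⟨g, hg, rfl⟩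
    exact ⟨RootSystemData.weyl_apply_mem_X hg hX, fun h hh =>
      RootSystemData.sub_weyl_apply_mem_Qpos hX hdom hμ (mul_mem hh hg)⟩

theorem minuscule_minimal_and_orbit {V V' : Type} [AddCommGroup V] [Module ℝ V] [FiniteDimensional ℝ V]
    [AddCommGroup V'] [Module ℝ V'] [FiniteDimensional ℝ V']
    (D : RootSystemData V V')
    (μ : V') (hX : μ ∈ D.X) (hdom : D.Dominant μ) (hne : μ ≠ 0)
    (hmin : ∀ α ∈ D.R, D.pair α μ = -1 ∨ D.pair α μ = 0 ∨ D.pair α μ = 1) :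
    (¬ ∃ ν ∈ D.Xplus, D.leQ ν μ ∧ ν ≠ μ) ∧ D.Omega μ = D.Worbit μ :=
  minuscule_minimal_and_orbit_general D μ hX hdom hmin
end
end

section
/- Let B be a W-invariant inner product on V∨ normalized so that B(α∨, α∨) = 2 for every short coroot α∨ (in each irreducible component of R). If η ∈ Q∨₊, η ≠ 0 and B(η, η) ≤ 2, then η is a short coroot; in particular η = β∨ for some positive root β. -/
open scoped BigOperators Classical

noncomputable section

/-!
Write `η` as a sum of coroots of positive roots. As `B(η, η) > 0`, some summand `γ∨` has
`B(γ∨, η) > 0`, hence `⟨γ, η⟩ ≥ 1`, and removing it does not increase the norm; by induction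
`η - γ∨` is `0` or a positive coroot `β∨`. Every coroot has norm at least `2` (the minimum over a
component is attained at a short coroot), so `B(β∨, γ∨) ≤ -1`. Then one of the Cartan integers
`⟨β, γ∨⟩`, `⟨γ, β∨⟩` is `-1` and `β∨ + γ∨` is a reflected coroot; the only obstructions, a
product of Cartan integers equal to `4` or a negative root with coroot `β∨ + γ∨`, would each
produce infinitely many roots. Finally `η = β∨` is short because `B(η, η) ≤ 2` bounds it by
every coroot norm and, within a component, ratios of coroot norms do not depend on `B`.
-/

section PositiveFunctional

variable {K V : Type*} [Field K] [LinearOrder K] [IsStrictOrderedRing K]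
  [AddCommGroup V] [Module K V]

theorem LinearIndepOn.exists_linearMap_pos_of_mem_closure {s : Set V}
    (hs : LinearIndepOn K id s) :
    ∃ φ : V →ₗ[K] K, ∀ v ∈ AddSubmonoid.closure s, v ≠ 0 → 0 < φ v := by
  let b := Module.Basis.extend hs
  have hb : ∀ x ∈ s, b.sumCoords x = 1 := fun x hx => by
    simpa [b, Module.Basis.extend_apply_self] using
      b.sumCoords_self_apply (i := ⟨x, hs.subset_extend _ hx⟩)
  refine ⟨b.sumCoords, fun v hv hv0 => ?_⟩
  suffices ∀ v ∈ AddSubmonoid.closure s, v = 0 ∨ 1 ≤ b.sumCoords v from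
    zero_lt_one.trans_le ((this v hv).resolve_left hv0)
  intro v hv
  induction hv using AddSubmonoid.closure_induction with
  | mem x hx => exact .inr (hb x hx).ge
  | zero => exact .inl rfl
  | add x y _ _ hx hy =>
    rcases hx with rfl | hx
    · simpa using hy
    rcases hy with rfl | hy
    · simpa using Or.inr hx
    exact .inr (by rw [map_add]; linarith)

end PositiveFunctional

theorem Multiset.exists_mem_pos_of_pos_sum {M N F : Type*} [AddCommMonoid M] [AddCommMonoid N]
    [LinearOrder N] [IsOrderedAddMonoid N] [FunLike F M N] [AddMonoidHomClass F M N] (f : F)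
    {T : Multiset M} (h : 0 < f T.sum) :
    ∃ c ∈ T, 0 < f c := by
  by_contra! hT
  have : (T.map f).sum ≤ (T.map fun _ => (0 : N)).sum := Multiset.sum_map_le_sum_map _ _ hT
  rw [← map_multiset_sum, Multiset.map_const', Multiset.sum_replicate, nsmul_zero] at this
  exact h.not_ge this

namespace RootSystemData

variable {V V' : Type} [AddCommGroup V] [Module ℝ V] [FiniteDimensional ℝ V]
  [AddCommGroup V'] [Module ℝ V'] [FiniteDimensional ℝ V']
  {D : RootSystemData V V'}

lemma Rpos_subset_R : D.Rpos ⊆ D.R := Finset.filter_subset _ _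

lemma mem_Rpos {α : V} : α ∈ D.Rpos ↔ α ∈ D.R ∧ α ∈ AddSubmonoid.closure (D.Δ : Set V) :=
  Finset.mem_filter

lemma coroot_ne_zero {α : V} (hα : α ∈ D.R) : D.coroot α ≠ 0 := by
  intro h
  simpa [h] using D.pair_self_eq_two α hα

lemma Qpos_le_X : D.Qpos ≤ D.X.toAddSubmonoid :=
  AddSubmonoid.closure_le.mpr <| by
    rintro _ ⟨α, hα, rfl⟩
    exact D.coroot_mem_X α (Rpos_subset_R hα)

namespace WInvInner

variable (B : D.WInvInner)

lemma form_self_nonneg (x : V') : 0 ≤ B.form x x := by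
  rcases eq_or_ne x 0 with rfl | hx
  · simp
  · exact (B.posdef x hx).le

lemma form_coroot_pos {α : V} (hα : α ∈ D.R) : 0 < B.form (D.coroot α) (D.coroot α) :=
  B.posdef _ (coroot_ne_zero hα)

/-- This is the invariance of `B` under the reflection `s_γ`. -/
lemma two_mul_form_coroot {γ : V} (hγ : γ ∈ D.R) (x : V') :
    2 * B.form (D.coroot γ) x = D.pair γ x * B.form (D.coroot γ) (D.coroot γ) := by
  have h := B.invariant _ (Subgroup.subset_closure ⟨γ, hγ, rfl⟩) x (D.coroot γ)
  simp only [reflV', Module.reflection_apply, D.pair_self_eq_two γ hγ, map_sub, map_smul,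
    LinearMap.sub_apply, LinearMap.smul_apply, smul_eq_mul] at h
  linarith [B.symm x (D.coroot γ)]

end WInvInner

lemma pair_mul_form_coroot_eq (B : D.WInvInner) {α β : V} (hα : α ∈ D.R) (hβ : β ∈ D.R) :
    D.pair α (D.coroot β) * B.form (D.coroot α) (D.coroot α) =
      D.pair β (D.coroot α) * B.form (D.coroot β) (D.coroot β) := by
  rw [← B.two_mul_form_coroot hα, ← B.two_mul_form_coroot hβ, B.symm]

lemma pair_mul_pair_le_four (B : D.WInvInner) {α β : V} (hα : α ∈ D.R) (hβ : β ∈ D.R) :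
    D.pair α (D.coroot β) * D.pair β (D.coroot α) ≤ 4 := by
  have hcs := LinearMap.BilinForm.apply_mul_apply_le_of_forall_zero_le B.form
    B.form_self_nonneg (D.coroot α) (D.coroot β)
  have hab := B.two_mul_form_coroot hα (D.coroot β)
  have hba := B.two_mul_form_coroot hβ (D.coroot α)
  refine le_of_mul_le_mul_right ?_ (mul_pos (B.form_coroot_pos hα) (B.form_coroot_pos hβ))
  calc D.pair α (D.coroot β) * D.pair β (D.coroot α) *
        (B.form (D.coroot α) (D.coroot α) * B.form (D.coroot β) (D.coroot β))
      = (2 * B.form (D.coroot α) (D.coroot β)) * (2 * B.form (D.coroot β) (D.coroot α)) := by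
        rw [hab, hba]; ring
    _ ≤ 4 * (B.form (D.coroot α) (D.coroot α) * B.form (D.coroot β) (D.coroot β)) := by
        linarith

lemma one_le_pair_of_form_pos (B : D.WInvInner) {γ : V} (hγ : γ ∈ D.R) {η : V'} (hη : η ∈ D.X)
    (h : 0 < B.form (D.coroot γ) η) : 1 ≤ D.pair γ η := by
  obtain ⟨n, hn⟩ := D.pair_X_int γ hγ η hη
  have hpos : 0 < D.pair γ η := by
    have := B.two_mul_form_coroot hγ η
    nlinarith [B.form_coroot_pos hγ]
  rw [hn] at hpos ⊢
  exact_mod_cast (Int.cast_pos.mp hpos : 0 < n)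

lemma form_sub_coroot_le (B : D.WInvInner) {γ : V} (hγ : γ ∈ D.R) {η : V'}
    (h : 1 ≤ D.pair γ η) :
    B.form (η - D.coroot γ) (η - D.coroot γ) ≤ B.form η η := by
  have := B.two_mul_form_coroot hγ η
  simp only [map_sub, LinearMap.sub_apply, B.symm η (D.coroot γ)]
  nlinarith [B.form_coroot_pos hγ]

section Components

variable (B B' : D.WInvInner)

def normRatio (α : V) : ℝ :=
  B'.form (D.coroot α) (D.coroot α) / B.form (D.coroot α) (D.coroot α)

variable {B B'}

lemma form_coroot_eq_normRatio_mul (α : V) :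
    B'.form (D.coroot α) (D.coroot α) = normRatio B B' α * B.form (D.coroot α) (D.coroot α) := by
  rcases eq_or_ne (D.coroot α) 0 with h | h
  · simp [h]
  · rw [normRatio, div_mul_cancel₀ _ (B.posdef _ h).ne']

lemma Linked.normRatio_eq {α β : V} (h : D.Linked α β) : normRatio B B' α = normRatio B B' β := by
  obtain ⟨hα, hβ, hp⟩ := h
  have e := pair_mul_form_coroot_eq B hα hβ
  have e' := pair_mul_form_coroot_eq B' hα hβ
  have hq : D.pair β (D.coroot α) ≠ 0 := by
    rintro hq
    rw [hq, zero_mul, mul_eq_zero] at e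
    exact hp (e.resolve_right (B.form_coroot_pos hα).ne')
  have ha := (B.form_coroot_pos hα).ne'
  have hb := (B.form_coroot_pos hβ).ne'
  rw [normRatio, normRatio, div_eq_div_iff ha hb]
  apply mul_left_cancel₀ (mul_ne_zero hp hq)
  linear_combination D.pair β (D.coroot α) * B.form (D.coroot β) (D.coroot β) * e' -
    D.pair β (D.coroot α) * B'.form (D.coroot β) (D.coroot β) * e

lemma SameComponent.normRatio_eq {α β : V} (h : D.SameComponent α β) :
    normRatio B B' α = normRatio B B' β := by
  induction h with
  | rel _ _ h => exact h.normRatio_eq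
  | refl => rfl
  | symm _ _ _ ih => exact ih.symm
  | trans _ _ _ _ _ ih₁ ih₂ => exact ih₁.trans ih₂

lemma SameComponent.form_coroot_le {α β : V} (h : D.SameComponent α β)
    (hle : B.form (D.coroot β) (D.coroot β) ≤ B.form (D.coroot α) (D.coroot α)) :
    B'.form (D.coroot β) (D.coroot β) ≤ B'.form (D.coroot α) (D.coroot α) := by
  have hr : 0 ≤ normRatio B B' α := div_nonneg (B'.form_self_nonneg _) (B.form_self_nonneg _)
  rw [form_coroot_eq_normRatio_mul (B := B) α, form_coroot_eq_normRatio_mul (B := B) β,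
    ← h.normRatio_eq]
  exact mul_le_mul_of_nonneg_left hle hr

end Components

lemma isShortCoroot_of_forall_form_le (B : D.WInvInner) {β : V} (hβ : β ∈ D.R)
    (h : ∀ α ∈ D.R, D.SameComponent α β →
      B.form (D.coroot β) (D.coroot β) ≤ B.form (D.coroot α) (D.coroot α)) :
    D.IsShortCoroot β :=
  ⟨hβ, fun _ α hα hαβ => hαβ.form_coroot_le (h α hα hαβ)⟩

lemma exists_isShortCoroot_form_le (B : D.WInvInner) {α : V} (hα : α ∈ D.R) :
    ∃ σ, D.IsShortCoroot σ ∧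
      B.form (D.coroot σ) (D.coroot σ) ≤ B.form (D.coroot α) (D.coroot α) := by
  obtain ⟨σ, hσ, hmin⟩ := (D.R.filter (D.SameComponent · α)).exists_min_image
    (fun σ => B.form (D.coroot σ) (D.coroot σ)) ⟨α, Finset.mem_filter.mpr ⟨hα, .refl α⟩⟩
  rw [Finset.mem_filter] at hσ
  refine ⟨σ, isShortCoroot_of_forall_form_le B hσ.1 fun β hβ hβσ => ?_,
    hmin α (Finset.mem_filter.mpr ⟨hα, .refl α⟩)⟩
  exact hmin β (Finset.mem_filter.mpr ⟨hβ, hβσ.trans _ _ _ hσ.2⟩)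

lemma two_le_form_coroot (B : D.WInvInner)
    (hnorm : ∀ α ∈ D.R, D.IsShortCoroot α → B.form (D.coroot α) (D.coroot α) = 2)
    {α : V} (hα : α ∈ D.R) : 2 ≤ B.form (D.coroot α) (D.coroot α) := by
  obtain ⟨σ, hσ, hle⟩ := exists_isShortCoroot_form_le B hα
  exact (hnorm σ hσ.1 hσ).ge.trans hle

/-- These are the roots `(s_x s_y)ᵏ x`. -/
lemma smul_add_smul_mem_R {x y : V} (hx : x ∈ D.R) (hy : y ∈ D.R)
    (h4 : D.pair x (D.coroot y) * D.pair y (D.coroot x) = 4) (k : ℕ) :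
    (2 * (k : ℝ) + 1) • x + ((k : ℝ) * -D.pair x (D.coroot y)) • y ∈ D.R := by
  induction k with
  | zero => simpa using hx
  | succ k ih =>
    set A := D.pair x (D.coroot y)
    have hsy := D.reflect_root_mem y hy _ ih
    have hA : D.pair ((2 * (k : ℝ) + 1) • x + ((k : ℝ) * -A) • y) (D.coroot y) = A := by
      simp only [map_add, map_smul, LinearMap.add_apply, LinearMap.smul_apply, smul_eq_mul,
        D.pair_self_eq_two y hy]
      ring
    rw [hA] at hsy
    have hsx := D.reflect_root_mem x hx _ hsy
    have hB : D.pair ((2 * (k : ℝ) + 1) • x + ((k : ℝ) * -A) • y - A • y) (D.coroot x) = -2 := by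
      simp only [map_add, map_sub, map_smul, LinearMap.add_apply, LinearMap.sub_apply,
        LinearMap.smul_apply, smul_eq_mul, D.pair_self_eq_two x hx]
      linear_combination (-(k : ℝ) - 1) * h4
    rw [hB] at hsx
    convert hsx using 1
    push_cast
    module

lemma pair_mul_pair_ne_four {x y : V} (hx : x ∈ D.Rpos) (hy : y ∈ D.Rpos)
    (hneg : D.pair x (D.coroot y) < 0) :
    D.pair x (D.coroot y) * D.pair y (D.coroot x) ≠ 4 := by
  intro h4
  obtain ⟨φ, hφ⟩ := LinearIndepOn.exists_linearMap_pos_of_mem_closure D.base_indep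
  have hφx := hφ x (mem_Rpos.mp hx).2 (D.root_ne_zero x (Rpos_subset_R hx))
  have hφy := hφ y (mem_Rpos.mp hy).2 (D.root_ne_zero y (Rpos_subset_R hy))
  let u : ℕ → V := fun k => (2 * (k : ℝ) + 1) • x + ((k : ℝ) * -D.pair x (D.coroot y)) • y
  have hu : StrictMono (φ ∘ u) := strictMono_nat_of_lt_succ fun k => by
    simp only [u, Function.comp_apply, map_add, map_smul, smul_eq_mul]
    push_cast
    nlinarith
  exact Set.infinite_of_injective_forall_mem hu.injective.of_comp
    (smul_add_smul_mem_R (Rpos_subset_R hx) (Rpos_subset_R hy) h4) D.R.finite_toSet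

lemma pair_ne_neg_pair {x y : V} (hx : x ∈ D.Rpos) (hy : y ∈ D.Rpos) :
    D.pair x ≠ -D.pair y := by
  intro h
  have hxy : D.pair x (D.coroot y) = -2 := by
    rw [h, LinearMap.neg_apply, D.pair_self_eq_two y (Rpos_subset_R hy)]
  have hyx : D.pair y (D.coroot x) = -2 := by
    rw [← neg_neg (D.pair y), ← h, LinearMap.neg_apply, D.pair_self_eq_two x (Rpos_subset_R hx)]
  exact pair_mul_pair_ne_four hx hy (by rw [hxy]; norm_num) (by rw [hxy, hyx]; norm_num)

lemma sub_pair_smul_mem_Rpos {μ β : V} (hμ : μ ∈ D.Rpos) (hβ : β ∈ D.Rpos)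
    (h : D.pair μ (D.coroot β) ≤ 0) : μ - D.pair μ (D.coroot β) • β ∈ D.Rpos := by
  refine mem_Rpos.mpr ⟨D.reflect_root_mem β (Rpos_subset_R hβ) μ (Rpos_subset_R hμ), ?_⟩
  obtain ⟨n, hn⟩ := D.crystallographic μ (Rpos_subset_R hμ) β (Rpos_subset_R hβ)
  obtain ⟨m, rfl⟩ := Int.exists_eq_neg_ofNat (show n ≤ 0 by exact_mod_cast hn ▸ h)
  rw [hn, Int.cast_neg, Int.cast_natCast, neg_smul, sub_neg_eq_add, Nat.cast_smul_eq_nsmul]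
  exact add_mem (mem_Rpos.mp hμ).2 (nsmul_mem (mem_Rpos.mp hβ).2 m)

lemma pair_mul_form_eq_of_coroot_eq_neg_add (B : D.WInvInner) {β γ μ : V} (hβ : β ∈ D.R)
    (hγ : γ ∈ D.R) (hμ : μ ∈ D.R) (hp : D.pair β (D.coroot γ) = -1)
    (hμ' : D.coroot μ = -(D.coroot β + D.coroot γ)) (x : V') :
    D.pair μ x * B.form (D.coroot γ) (D.coroot γ) =
      -(D.pair β x * B.form (D.coroot β) (D.coroot β) +
        D.pair γ x * B.form (D.coroot γ) (D.coroot γ)) := by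
  have hβγ := B.two_mul_form_coroot hβ (D.coroot γ)
  rw [hp] at hβγ
  have hμμ : B.form (D.coroot μ) (D.coroot μ) = B.form (D.coroot γ) (D.coroot γ) := by
    simp only [hμ', map_neg, map_add, LinearMap.neg_apply, LinearMap.add_apply,
      B.symm (D.coroot γ) (D.coroot β)]
    linarith
  have hμx := B.two_mul_form_coroot hμ x
  rw [hμμ, hμ', map_neg, map_add, LinearMap.neg_apply, LinearMap.add_apply] at hμx
  linarith [B.two_mul_form_coroot hβ x, B.two_mul_form_coroot hγ x]

/-- Were `-δ` positive, reflecting it in `β` would give a positive root with the pairing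
functional of `-γ`. -/
lemma mem_Rpos_of_coroot_eq_add (B : D.WInvInner) {β γ δ : V} (hβ : β ∈ D.Rpos)
    (hγ : γ ∈ D.Rpos) (hp : D.pair β (D.coroot γ) = -1) (hδ : δ ∈ D.R)
    (hδ' : D.coroot δ = D.coroot β + D.coroot γ) : δ ∈ D.Rpos := by
  refine (D.base_generates δ hδ).elim (fun h => mem_Rpos.mpr ⟨hδ, h⟩) fun hneg => ?_
  have hβR := Rpos_subset_R hβ
  have hγR := Rpos_subset_R hγ
  have hμ : -δ ∈ D.Rpos := mem_Rpos.mpr ⟨D.neg_mem δ hδ, hneg⟩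
  have key := pair_mul_form_eq_of_coroot_eq_neg_add B hβR hγR (Rpos_subset_R hμ) hp
    (by rw [D.coroot_neg δ hδ, hδ'])
  have hk : D.pair (-δ) (D.coroot β) * B.form (D.coroot γ) (D.coroot γ) =
      -B.form (D.coroot β) (D.coroot β) := by
    have hsymm := pair_mul_form_coroot_eq B hβR hγR
    have hkey := key (D.coroot β)
    rw [hp] at hsymm
    rw [D.pair_self_eq_two β hβR] at hkey
    linarith
  have hk0 : D.pair (-δ) (D.coroot β) ≤ 0 := by
    nlinarith [B.form_coroot_pos hβR, B.form_coroot_pos hγR]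
  refine absurd ?_ (pair_ne_neg_pair (sub_pair_smul_mem_Rpos hμ hβ hk0) hγ)
  ext x
  apply mul_right_cancel₀ (B.form_coroot_pos hγR).ne'
  simp only [map_sub, map_smul, LinearMap.sub_apply, LinearMap.smul_apply, smul_eq_mul,
    LinearMap.neg_apply]
  linear_combination key x - D.pair β x * hk

lemma exists_coroot_eq_add_of_pair_eq_neg_one (B : D.WInvInner) {β γ : V} (hβ : β ∈ D.Rpos)
    (hγ : γ ∈ D.Rpos) (hp : D.pair β (D.coroot γ) = -1) :
    ∃ δ ∈ D.Rpos, D.coroot β + D.coroot γ = D.coroot δ := by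
  obtain ⟨δ, hδ, hδ'⟩ := D.reflect_coroot_mem β (Rpos_subset_R hβ) γ (Rpos_subset_R hγ)
  rw [hp, neg_one_smul, sub_neg_eq_add, add_comm] at hδ'
  exact ⟨δ, mem_Rpos_of_coroot_eq_add B hβ hγ hp hδ hδ', hδ'.symm⟩

/-- Two coroots of norm at least `2` with sum of norm at most `2` are at an obtuse angle, so
one of the Cartan integers is `-1`: the alternative `⟨β, γ∨⟩⟨γ, β∨⟩ = 4` is excluded. -/
lemma exists_coroot_eq_add (B : D.WInvInner)
    (h2 : ∀ α ∈ D.R, 2 ≤ B.form (D.coroot α) (D.coroot α)) {β γ : V} (hβ : β ∈ D.Rpos)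
    (hγ : γ ∈ D.Rpos) (hle : B.form (D.coroot β + D.coroot γ) (D.coroot β + D.coroot γ) ≤ 2) :
    ∃ δ ∈ D.Rpos, D.coroot β + D.coroot γ = D.coroot δ := by
  have hβR := Rpos_subset_R hβ
  have hγR := Rpos_subset_R hγ
  have hobtuse : B.form (D.coroot β) (D.coroot γ) ≤ -1 := by
    simp only [map_add, LinearMap.add_apply, B.symm (D.coroot γ) (D.coroot β)] at hle
    linarith [h2 β hβR, h2 γ hγR]
  obtain ⟨p, hp⟩ := D.crystallographic β hβR γ hγR
  obtain ⟨q, hq⟩ := D.crystallographic γ hγR β hβR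
  have hp0 : p < 0 := by
    have := B.two_mul_form_coroot hβR (D.coroot γ)
    have : (p : ℝ) < 0 := by nlinarith [B.form_coroot_pos hβR]
    exact_mod_cast this
  have hq0 : q < 0 := by
    have := B.two_mul_form_coroot hγR (D.coroot β)
    rw [B.symm] at this
    have : (q : ℝ) < 0 := by nlinarith [B.form_coroot_pos hγR]
    exact_mod_cast this
  have hle4 : p * q ≤ 4 := by exact_mod_cast hp ▸ hq ▸ pair_mul_pair_le_four B hβR hγR
  have hne4 : p * q ≠ 4 := fun h =>
    pair_mul_pair_ne_four hβ hγ (by rw [hp]; exact_mod_cast hp0) (by rw [hp, hq]; exact_mod_cast h)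
  obtain rfl | rfl : p = -1 ∨ q = -1 := by
    by_contra! h
    have hp2 : p ≤ -2 := by omega
    have hq2 : q ≤ -2 := by omega
    exact hne4 (le_antisymm hle4 (by nlinarith))
  · exact exists_coroot_eq_add_of_pair_eq_neg_one B hβ hγ (by rw [hp]; norm_num)
  · obtain ⟨δ, hδ, hδ'⟩ := exists_coroot_eq_add_of_pair_eq_neg_one B hγ hβ (by rw [hq]; norm_num)
    exact ⟨δ, hδ, by rw [add_comm, hδ']⟩

lemma exists_coroot_eq_sum (B : D.WInvInner)
    (h2 : ∀ α ∈ D.R, 2 ≤ B.form (D.coroot α) (D.coroot α)) (T : Multiset V')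
    (hT : ∀ c ∈ T, c ∈ D.coroot '' D.Rpos) (hne : T.sum ≠ 0) (hle : B.form T.sum T.sum ≤ 2) :
    ∃ β ∈ D.Rpos, T.sum = D.coroot β := by
  induction T using Multiset.strongInductionOn with | ih T ih => ?_
  obtain ⟨c, hcT, hc⟩ := Multiset.exists_mem_pos_of_pos_sum (B.form.flip T.sum)
    (B.posdef _ hne)
  obtain ⟨γ, hγ, rfl⟩ := hT c hcT
  have hγR := Rpos_subset_R hγ
  have hsum : D.coroot γ + (T.erase (D.coroot γ)).sum = T.sum := Multiset.sum_erase hcT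
  rcases eq_or_ne (T.erase (D.coroot γ)).sum 0 with h0 | h0
  · exact ⟨γ, hγ, by rw [← hsum, h0, add_zero]⟩
  have hX : T.sum ∈ D.X := Qpos_le_X (AddSubmonoid.multiset_sum_mem _ _ fun c hc =>
    AddSubmonoid.subset_closure (hT c hc))
  have hle' : B.form (T.erase (D.coroot γ)).sum (T.erase (D.coroot γ)).sum ≤ 2 := by
    rw [eq_sub_of_add_eq' hsum]
    exact (form_sub_coroot_le B hγR (one_le_pair_of_form_pos B hγR hX hc)).trans hle
  obtain ⟨β, hβ, hβ'⟩ := ih _ (Multiset.erase_lt.mpr hcT)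
    (fun c hc => hT c (Multiset.mem_of_mem_erase hc)) h0 hle'
  rw [← hsum, hβ', add_comm] at hle ⊢
  exact exists_coroot_eq_add B h2 hβ hγ hle

end RootSystemData

theorem short_norm_le_two_is_short_coroot {V V' : Type} [AddCommGroup V] [Module ℝ V] [FiniteDimensional ℝ V]
    [AddCommGroup V'] [Module ℝ V'] [FiniteDimensional ℝ V']
    (D : RootSystemData V V')
    (B : D.WInvInner)
    (hnorm : ∀ α ∈ D.R, D.IsShortCoroot α → B.form (D.coroot α) (D.coroot α) = 2)
    (η : V') (hη : η ∈ D.Qpos) (hne : η ≠ 0) (hle : B.form η η ≤ 2) :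
    ∃ β ∈ D.Rpos, D.IsShortCoroot β ∧ η = D.coroot β := by
  have h2 : ∀ α ∈ D.R, 2 ≤ B.form (D.coroot α) (D.coroot α) :=
    fun α hα => RootSystemData.two_le_form_coroot B hnorm hα
  obtain ⟨T, hT, rfl⟩ := AddSubmonoid.exists_multiset_of_mem_closure hη
  obtain ⟨β, hβ, hβT⟩ := RootSystemData.exists_coroot_eq_sum B h2 T hT hne hle
  refine ⟨β, hβ, RootSystemData.isShortCoroot_of_forall_form_le B
    (RootSystemData.Rpos_subset_R hβ) fun α hα _ => ?_, hβT⟩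
  rw [← hβT]
  exact hle.trans (h2 α hα)

end
end
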